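/- arXiv:1603.05052 — 4 statements merged into one kernel-verified Lean document; each statement's English description precedes it below -/
import Mathlib

section
/- Let I, J be two imaginary unit quaternions (I² = J² = -1) and let f : ℍ → ℍ be a slice regular function. Then the L² Gaussian-weighted norms of f on the slices ℂ_I and ℂ_J with parameter ν > 0 satisfy (1/2)‖f‖_I ≤ ‖f‖_J ≤ 2‖f‖_I, where ‖f‖_I² = ∫_{ℂ_I} |f(x+yI)|² e^{-ν(x²+y²)} dx dy. In particular the slice Fock space F^{2,ν}_I(ℍ) does not depend on I. -/
open MeasureTheory Real Quaternion

noncomputable def hermiteW (ν : ℝ) (n : ℕ) (x : ℝ) : ℝ :=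
  (-1)^n * Real.exp (ν * x^2 / 2) * iteratedDeriv n (fun t => Real.exp (-ν * t^2)) x

/-- A function `f : ℍ → ℍ` is slice regular if its restriction to every slice
`ℂ_I = ℝ + ℝI` is holomorphic, i.e. real differentiable and annihilated by
the Cauchy-Riemann operator `(1/2)(∂/∂x + I ∂/∂y)`. -/
def SliceRegular (f : Quaternion ℝ → Quaternion ℝ) : Prop :=
  ∀ I : Quaternion ℝ, I^2 = -1 →
    (∀ p : ℝ × ℝ,
      DifferentiableAt ℝ (fun p : ℝ × ℝ => f ((p.1 : Quaternion ℝ) + p.2 • I)) p) ∧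
    (∀ p : ℝ × ℝ,
      fderiv ℝ (fun p : ℝ × ℝ => f ((p.1 : Quaternion ℝ) + p.2 • I)) p (1, 0) +
        I * fderiv ℝ (fun p : ℝ × ℝ => f ((p.1 : Quaternion ℝ) + p.2 • I)) p (0, 1) = 0)

/-- Squared Gaussian-weighted `L²` norm of `f` on the slice `ℂ_I`. -/
noncomputable def sliceNormSq (ν : ℝ) (f : Quaternion ℝ → Quaternion ℝ)
    (I : Quaternion ℝ) : ℝ :=
  ∫ p : ℝ × ℝ, ‖f ((p.1 : Quaternion ℝ) + p.2 • I)‖^2 * Real.exp (-ν * (p.1^2 + p.2^2))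

/-- The kernel of the quaternionic Segal-Bargmann transform. -/
noncomputable def SBkernel (ν : ℝ) (q : Quaternion ℝ) (x : ℝ) : Quaternion ℝ :=
  ((ν/π)^((3:ℝ)/4)) •
    NormedSpace.exp (-(ν/2) • (q^2 + ((x : Quaternion ℝ))^2) + (ν * Real.sqrt 2 * x) • q)

/-- The quaternionic Segal-Bargmann transform. -/
noncomputable def Bargmann (ν : ℝ) (ψ : ℝ → Quaternion ℝ) (q : Quaternion ℝ) :
    Quaternion ℝ :=
  ∫ x : ℝ, SBkernel ν q x * ψ x

/-! Both sides of the representation formula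
`f (x + yJ) = ½ (1 - JI) f (x + yI) + ½ (1 + JI) f (x - yI)` are `J`-holomorphic in `(x, y)`:
left multiplication by `1 - JI` (resp. `1 + JI`) intertwines `I` (resp. `-I`) with `J`. They agree
on the real axis, so they coincide by the identity principle, applied to `ℍ` viewed as a complex
vector space through left multiplication by `ℂ_J`. As `‖1 ± JI‖ ≤ 2`, this gives
`|f (x + yJ)|² ≤ 2 |f (x + yI)|² + 2 |f (x - yI)|²`, and since the Gaussian weight is invariant
under `y ↦ -y`, integration yields `‖f‖_J² ≤ 4 ‖f‖_I²`; the other inequality is symmetric. -/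

namespace Quaternion

theorem norm_eq_one_of_sq_eq_neg_one {J : ℍ} (hJ : J ^ 2 = -1) : ‖J‖ = 1 := by
  have h : ‖J‖ ^ 2 = 1 := by rw [← norm_pow, hJ, norm_neg, norm_one]
  exact (pow_eq_one_iff_of_nonneg (norm_nonneg J) two_ne_zero).mp h

theorem normSq_eq_one_of_sq_eq_neg_one {J : ℍ} (hJ : J ^ 2 = -1) : normSq J = 1 := by
  rw [normSq_eq_norm_mul_self, norm_eq_one_of_sq_eq_neg_one hJ, mul_one]

theorem re_eq_zero_of_sq_eq_neg_one {J : ℍ} (hJ : J ^ 2 = -1) : J.re = 0 :=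
  sq_eq_neg_normSq.mp (by rw [hJ, normSq_eq_one_of_sq_eq_neg_one hJ, coe_one])

theorem normSq_coe_add_smul {J : ℍ} (hJ : J ^ 2 = -1) (a b : ℝ) :
    normSq ((a : ℍ) + b • J) = a ^ 2 + b ^ 2 := by
  rw [normSq_add, normSq_coe, normSq_smul, normSq_eq_one_of_sq_eq_neg_one hJ, star_smul,
    coe_mul_eq_smul, smul_smul, re_smul, re_star, re_eq_zero_of_sq_eq_neg_one hJ]
  ring

theorem norm_liftAux {J : ℍ} (hJ : J * J = -1) (z : ℂ) :
    ‖Complex.liftAux J hJ z‖ = ‖z‖ := by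
  have hsq : (‖Complex.liftAux J hJ z‖) ^ 2 = ‖z‖ ^ 2 := by
    rw [Complex.liftAux_apply, sq, ← normSq_eq_norm_mul_self, Complex.sq_norm,
      Complex.normSq_apply, algebraMap_def, normSq_coe_add_smul (by rwa [sq])]
    ring
  exact (pow_left_inj₀ (norm_nonneg _) (norm_nonneg _) two_ne_zero).mp hsq

end Quaternion

section CauchyRiemann

variable {E : Type*} [NormedAddCommGroup E] [NormedSpace ℝ E] [NormedSpace ℂ E]
  [IsScalarTower ℝ ℂ E]

theorem HasFDerivAt.differentiableAt_complex {f : ℂ → E} {f' : ℂ →L[ℝ] E} {z : ℂ}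
    (hf : HasFDerivAt f f' z) (hI : f' Complex.I = Complex.I • f' 1) :
    DifferentiableAt ℂ f z := by
  refine (hasFDerivAt_of_restrictScalars ℝ hf (f' := (1 : ℂ →L[ℂ] ℂ).smulRight (f' 1)) ?_)
    |>.differentiableAt
  ext w
  have hw : w = w.re • (1 : ℂ) + w.im • Complex.I := by simp [Complex.re_add_im]
  calc w • f' 1 = ((w.re : ℂ) + w.im * Complex.I) • f' 1 := by rw [Complex.re_add_im]
    _ = w.re • f' 1 + w.im • Complex.I • f' 1 := by
      rw [add_smul, mul_smul, ← Complex.coe_algebraMap, algebraMap_smul, algebraMap_smul]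
    _ = f' w := by rw [← hI, ← map_smul, ← map_smul, ← map_add, ← hw]

theorem differentiable_complex_of_cauchyRiemann {F : ℝ × ℝ → E}
    (hF : ∀ p, DifferentiableAt ℝ F p)
    (hcr : ∀ p, fderiv ℝ F p (0, 1) = Complex.I • fderiv ℝ F p (1, 0)) :
    Differentiable ℂ fun z : ℂ => F (z.re, z.im) := fun z =>
  ((hF _).hasFDerivAt.comp z (Complex.reCLM.prod Complex.imCLM).hasFDerivAt)
    |>.differentiableAt_complex (by simpa using hcr (z.re, z.im))

end CauchyRiemann

theorem Complex.eq_of_forall_ofReal_eq {E : Type*} [NormedAddCommGroup E] [NormedSpace ℂ E]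
    [CompleteSpace E] {f g : ℂ → E} (hf : Differentiable ℂ f) (hg : Differentiable ℂ g)
    (h : ∀ x : ℝ, f x = g x) : f = g := by
  refine (Complex.analyticOnNhd_univ_iff_differentiable.mpr hf).eq_of_frequently_eq
    (Complex.analyticOnNhd_univ_iff_differentiable.mpr hg) (z₀ := 0) ?_
  have hreal : Filter.Tendsto ((↑) : ℝ → ℂ) (nhdsWithin 0 {0}ᶜ) (nhdsWithin 0 {0}ᶜ) := by
    simpa using Complex.continuous_ofReal.continuousWithinAt.tendsto_nhdsWithin
      (x := (0 : ℝ)) (s := {0}ᶜ) (t := {0}ᶜ) (fun x hx => by simpa using hx)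
  exact hreal.frequently (Filter.Frequently.of_forall h)

/-- `F : ℝ × ℝ → ℍ` is holomorphic for the complex structure given by left multiplication
by `J`; `SliceRegular f` says this of `(x, y) ↦ f (x + y J)` for every imaginary unit `J`. -/
def SliceHolomorphic (J : ℍ) (F : ℝ × ℝ → ℍ) : Prop :=
  (∀ p, DifferentiableAt ℝ F p) ∧ ∀ p, fderiv ℝ F p (1, 0) + J * fderiv ℝ F p (0, 1) = 0

namespace SliceHolomorphic

variable {I J : ℍ} {F G : ℝ × ℝ → ℍ}

theorem continuous (hF : SliceHolomorphic J F) : Continuous F :=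
  continuous_iff_continuousAt.mpr fun p => (hF.1 p).continuousAt

theorem fderiv_apply_snd (hJ : J ^ 2 = -1) (hF : SliceHolomorphic J F) (p : ℝ × ℝ) :
    fderiv ℝ F p (0, 1) = J * fderiv ℝ F p (1, 0) := by
  have h := congrArg (J * ·) (hF.2 p)
  simp only [mul_add, ← mul_assoc, ← sq, hJ, neg_one_mul, mul_zero] at h
  exact (add_neg_eq_zero.mp h).symm

theorem add (hF : SliceHolomorphic J F) (hG : SliceHolomorphic J G) :
    SliceHolomorphic J (F + G) := by
  refine ⟨fun p => (hF.1 p).add (hG.1 p), fun p => ?_⟩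
  rw [fderiv_add (hF.1 p) (hG.1 p)]
  simp only [add_apply, mul_add]
  rw [add_add_add_comm, hF.2 p, hG.2 p, add_zero]

theorem const_mul {c : ℍ} (hc : c * I = J * c) (hF : SliceHolomorphic I F) :
    SliceHolomorphic J fun p => c * F p := by
  refine ⟨fun p => (hF.1 p).const_mul c, fun p => ?_⟩
  rw [fderiv_const_mul (hF.1 p)]
  simp only [smul_apply, smul_eq_mul]
  rw [← mul_assoc J, ← hc, mul_assoc, ← mul_add, hF.2 p, mul_zero]

theorem comp_neg_snd (hF : SliceHolomorphic I F) :
    SliceHolomorphic (-I) fun p => F (p.1, -p.2) := by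
  let σ : ℝ × ℝ →L[ℝ] ℝ × ℝ :=
    (ContinuousLinearMap.fst ℝ ℝ ℝ).prod (-ContinuousLinearMap.snd ℝ ℝ ℝ)
  have hσ : (fun p : ℝ × ℝ => F (p.1, -p.2)) = F ∘ σ := rfl
  have hd : ∀ p, DifferentiableAt ℝ (F ∘ σ) p := fun p =>
    (hF.1 (σ p)).comp p σ.differentiableAt
  refine ⟨hσ ▸ hd, fun p => ?_⟩
  rw [hσ, fderiv_comp p (hF.1 (σ p)) σ.differentiableAt, σ.fderiv]
  have h10 : σ (1, 0) = (1, 0) := by simp [σ]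
  have h01 : σ (0, 1) = -(0, 1) := by simp [σ]
  simp only [ContinuousLinearMap.coe_comp, Function.comp_apply, h10, h01, map_neg,
    neg_mul_neg]
  exact hF.2 (σ p)

theorem eq_of_eq_on_real (hJ : J ^ 2 = -1) (hF : SliceHolomorphic J F)
    (hG : SliceHolomorphic J G) (h : ∀ x, F (x, 0) = G (x, 0)) : F = G := by
  have hJJ : J * J = -1 := by rw [← sq, hJ]
  -- `ℍ` is a complex normed space through left multiplication by `ℂ_J ≅ ℂ`.
  let : Module ℂ ℍ := Module.compHom ℍ (Complex.liftAux J hJJ : ℂ →+* ℍ)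
  let : IsScalarTower ℝ ℂ ℍ := ⟨fun r z q => by
    change Complex.liftAux J hJJ (r • z) * q = r • (Complex.liftAux J hJJ z * q)
    rw [map_smul, smul_mul_assoc]⟩
  let : NormedSpace ℂ ℍ := ⟨fun z q => by
    change ‖Complex.liftAux J hJJ z * q‖ ≤ ‖z‖ * ‖q‖
    rw [norm_mul, Quaternion.norm_liftAux]⟩
  have holo : ∀ {H : ℝ × ℝ → ℍ}, SliceHolomorphic J H →
      Differentiable ℂ fun z : ℂ => H (z.re, z.im) := fun hH =>
    differentiable_complex_of_cauchyRiemann hH.1 fun p => by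
      rw [hH.fderiv_apply_snd hJ]
      change _ = Complex.liftAux J hJJ Complex.I * _
      rw [Complex.liftAux_apply_I]
  have := Complex.eq_of_forall_ofReal_eq (holo hF) (holo hG) (by simpa using h)
  funext p
  simpa using congrFun this (p.1 + p.2 * Complex.I)

end SliceHolomorphic

theorem SliceRegular.sliceHolomorphic {f : ℍ → ℍ} (hf : SliceRegular f) {I : ℍ}
    (hI : I ^ 2 = -1) : SliceHolomorphic I fun p => f (p.1 + p.2 • I) :=
  hf I hI

theorem SliceRegular.repr_formula {f : ℍ → ℍ} (hf : SliceRegular f) {I J : ℍ}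
    (hI : I ^ 2 = -1) (hJ : J ^ 2 = -1) (p : ℝ × ℝ) :
    f (p.1 + p.2 • J) =
      (2 : ℝ)⁻¹ • ((1 - J * I) * f (p.1 + p.2 • I) + (1 + J * I) * f (p.1 + (-p.2) • I)) := by
  have hI' : I * I = -1 := by rw [← sq, hI]
  have hJ' : J * J = -1 := by rw [← sq, hJ]
  have h₁ : (1 - J * I) * I = J * (1 - J * I) := by
    rw [sub_mul, mul_assoc, hI', mul_sub, ← mul_assoc, hJ']
    noncomm_ring
  have h₂ : (1 + J * I) * -I = J * (1 + J * I) := by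
    rw [mul_neg, add_mul, mul_assoc, hI', mul_add, ← mul_assoc, hJ']
    noncomm_ring
  have hsum : (2 : ℝ)⁻¹ • (1 - J * I) + (2 : ℝ)⁻¹ • (1 + J * I) = 1 := by
    rw [← smul_add, sub_add_add_cancel, ← two_smul ℝ, smul_smul, inv_mul_cancel₀ two_ne_zero,
      one_smul]
  have hrepr := SliceHolomorphic.eq_of_eq_on_real hJ (hf.sliceHolomorphic hJ)
    (((hf.sliceHolomorphic hI).const_mul (c := (2 : ℝ)⁻¹ • (1 - J * I))
        (by rw [smul_mul_assoc, mul_smul_comm, h₁])).add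
      ((hf.sliceHolomorphic hI).comp_neg_snd.const_mul (c := (2 : ℝ)⁻¹ • (1 + J * I))
        (by rw [smul_mul_assoc, mul_smul_comm, h₂])))
    (fun x => by
      simp only [Pi.add_apply, zero_smul, neg_zero, add_zero, ← add_mul, hsum, one_mul])
  rw [smul_add, ← smul_mul_assoc, ← smul_mul_assoc]
  exact congrFun hrepr p

theorem SliceRegular.norm_le {f : ℍ → ℍ} (hf : SliceRegular f) {I J : ℍ}
    (hI : I ^ 2 = -1) (hJ : J ^ 2 = -1) (p : ℝ × ℝ) :
    ‖f (p.1 + p.2 • J)‖ ≤ ‖f (p.1 + p.2 • I)‖ + ‖f (p.1 + (-p.2) • I)‖ := by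
  have hJI : ‖J * I‖ = 1 := by
    rw [norm_mul, Quaternion.norm_eq_one_of_sq_eq_neg_one hI,
      Quaternion.norm_eq_one_of_sq_eq_neg_one hJ, mul_one]
  have h₁ : ‖1 - J * I‖ ≤ 2 := (norm_sub_le _ _).trans (by rw [norm_one, hJI]; norm_num)
  have h₂ : ‖1 + J * I‖ ≤ 2 := (norm_add_le _ _).trans (by rw [norm_one, hJI]; norm_num)
  rw [hf.repr_formula hI hJ p, norm_smul, Real.norm_of_nonneg (by norm_num)]
  calc 2⁻¹ * ‖(1 - J * I) * f (p.1 + p.2 • I) + (1 + J * I) * f (p.1 + (-p.2) • I)‖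
      ≤ 2⁻¹ * (2 * ‖f (p.1 + p.2 • I)‖ + 2 * ‖f (p.1 + (-p.2) • I)‖) := by
        gcongr
        refine (norm_add_le _ _).trans (add_le_add ?_ ?_) <;> rw [norm_mul] <;> gcongr
    _ = ‖f (p.1 + p.2 • I)‖ + ‖f (p.1 + (-p.2) • I)‖ := by ring

section GaussianWeight

variable {E : Type*} [NormedAddCommGroup E]

noncomputable def gaussianNormSq (ν : ℝ) (F : ℝ × ℝ → E) (p : ℝ × ℝ) : ℝ :=
  ‖F p‖ ^ 2 * Real.exp (-ν * (p.1 ^ 2 + p.2 ^ 2))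

theorem gaussianNormSq_nonneg (ν : ℝ) (F : ℝ × ℝ → E) (p : ℝ × ℝ) :
    0 ≤ gaussianNormSq ν F p :=
  mul_nonneg (sq_nonneg _) (Real.exp_nonneg _)

theorem measurePreserving_neg_snd :
    MeasurePreserving ((MeasurableEquiv.refl ℝ).prodCongr (MeasurableEquiv.neg ℝ))
      volume volume :=
  Measure.volume_eq_prod ℝ ℝ ▸
    (MeasurePreserving.id volume).prod (Measure.measurePreserving_neg volume)

theorem integral_comp_neg_snd (g : ℝ × ℝ → ℝ) : ∫ p : ℝ × ℝ, g (p.1, -p.2) = ∫ p, g p :=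
  measurePreserving_neg_snd.integral_comp' g

theorem integrable_comp_neg_snd {g : ℝ × ℝ → ℝ} (hg : Integrable g) :
    Integrable fun p : ℝ × ℝ => g (p.1, -p.2) :=
  (measurePreserving_neg_snd.integrable_comp_emb (MeasurableEquiv.measurableEmbedding _)).mpr hg

theorem gaussianNormSq_le {F : ℝ × ℝ → E} {G : ℝ × ℝ → E}
    (hle : ∀ p, ‖G p‖ ≤ ‖F p‖ + ‖F (p.1, -p.2)‖) (ν : ℝ) (p : ℝ × ℝ) :
    gaussianNormSq ν G p ≤ 2 * gaussianNormSq ν F p + 2 * gaussianNormSq ν F (p.1, -p.2) := by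
  have hsq : ‖G p‖ ^ 2 ≤ 2 * ‖F p‖ ^ 2 + 2 * ‖F (p.1, -p.2)‖ ^ 2 := by
    nlinarith [hle p, norm_nonneg (G p), sq_nonneg (‖F p‖ - ‖F (p.1, -p.2)‖)]
  simp only [gaussianNormSq, neg_sq]
  nlinarith [mul_le_mul_of_nonneg_right hsq (Real.exp_nonneg (-ν * (p.1 ^ 2 + p.2 ^ 2)))]

theorem integrable_gaussianNormSq_and_integral_le {F G : ℝ × ℝ → E} {ν : ℝ}
    (hG : Continuous G) (hle : ∀ p, ‖G p‖ ≤ ‖F p‖ + ‖F (p.1, -p.2)‖)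
    (hF : Integrable (gaussianNormSq ν F)) :
    Integrable (gaussianNormSq ν G) ∧
      ∫ p, gaussianNormSq ν G p ≤ 4 * ∫ p, gaussianNormSq ν F p := by
  have hbound : Integrable fun p =>
      2 * gaussianNormSq ν F p + 2 * gaussianNormSq ν F (p.1, -p.2) :=
    (hF.const_mul 2).add ((integrable_comp_neg_snd hF).const_mul 2)
  have hGint : Integrable (gaussianNormSq ν G) := by
    refine hbound.mono' (by unfold gaussianNormSq; fun_prop)
      (Filter.Eventually.of_forall fun p => ?_)
    rw [Real.norm_of_nonneg (gaussianNormSq_nonneg ν G p)]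
    exact gaussianNormSq_le hle ν p
  refine ⟨hGint, (integral_mono hGint hbound (gaussianNormSq_le hle ν)).trans_eq ?_⟩
  rw [integral_add (hF.const_mul 2) ((integrable_comp_neg_snd hF).const_mul 2),
    integral_const_mul, integral_const_mul, integral_comp_neg_snd (gaussianNormSq ν F)]
  ring

end GaussianWeight

theorem SliceRegular.integrable_gaussianNormSq_and_sliceNormSq_le {f : ℍ → ℍ}
    (hf : SliceRegular f) {I J : ℍ} (hI : I ^ 2 = -1) (hJ : J ^ 2 = -1) {ν : ℝ}
    (hint : Integrable (gaussianNormSq ν fun p => f (p.1 + p.2 • I))) :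
    Integrable (gaussianNormSq ν fun p => f (p.1 + p.2 • J)) ∧
      sliceNormSq ν f J ≤ 4 * sliceNormSq ν f I :=
  integrable_gaussianNormSq_and_integral_le (hf.sliceHolomorphic hJ).continuous
    (hf.norm_le hI hJ) hint

theorem SliceRegular.sliceNormSq_le {f : ℍ → ℍ} (hf : SliceRegular f) {I J : ℍ}
    (hI : I ^ 2 = -1) (hJ : J ^ 2 = -1) (ν : ℝ) :
    sliceNormSq ν f J ≤ 4 * sliceNormSq ν f I := by
  by_cases hint : Integrable (gaussianNormSq ν fun p => f (p.1 + p.2 • I))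
  · exact (hf.integrable_gaussianNormSq_and_sliceNormSq_le hI hJ hint).2
  · have hint' : ¬Integrable (gaussianNormSq ν fun p => f (p.1 + p.2 • J)) := fun h =>
      hint (hf.integrable_gaussianNormSq_and_sliceNormSq_le hJ hI h).1
    show ∫ p, gaussianNormSq ν (fun p => f (p.1 + p.2 • J)) p ≤
      4 * ∫ p, gaussianNormSq ν (fun p => f (p.1 + p.2 • I)) p
    rw [integral_undef hint, integral_undef hint', mul_zero]

theorem Real.sqrt_le_two_mul_sqrt {a b : ℝ} (h : a ≤ 4 * b) : √a ≤ 2 * √b := by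
  calc √a ≤ √(2 ^ 2 * b) := Real.sqrt_le_sqrt (by linarith)
    _ = 2 * √b := by rw [Real.sqrt_mul (by positivity), Real.sqrt_sq zero_le_two]

theorem stmt5_general (ν : ℝ) (f : Quaternion ℝ → Quaternion ℝ)
    (hf : SliceRegular f) (I J : Quaternion ℝ) (hI : I^2 = -1) (hJ : J^2 = -1) :
    ((1/2) * Real.sqrt (sliceNormSq ν f I) ≤ Real.sqrt (sliceNormSq ν f J) ∧
      Real.sqrt (sliceNormSq ν f J) ≤ 2 * Real.sqrt (sliceNormSq ν f I)) ∧
    (Integrable (fun p : ℝ × ℝ =>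
        ‖f ((p.1 : Quaternion ℝ) + p.2 • I)‖^2 * Real.exp (-ν * (p.1^2 + p.2^2))) ↔
      Integrable (fun p : ℝ × ℝ =>
        ‖f ((p.1 : Quaternion ℝ) + p.2 • J)‖^2 * Real.exp (-ν * (p.1^2 + p.2^2)))) := by
  have hJI := Real.sqrt_le_two_mul_sqrt (hf.sliceNormSq_le hI hJ ν)
  have hIJ := Real.sqrt_le_two_mul_sqrt (hf.sliceNormSq_le hJ hI ν)
  exact ⟨⟨by linarith, hJI⟩,
    fun h => (hf.integrable_gaussianNormSq_and_sliceNormSq_le hI hJ h).1,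
    fun h => (hf.integrable_gaussianNormSq_and_sliceNormSq_le hJ hI h).1⟩

theorem stmt5 (ν : ℝ) (hν : 0 < ν) (f : Quaternion ℝ → Quaternion ℝ)
    (hf : SliceRegular f) (I J : Quaternion ℝ) (hI : I^2 = -1) (hJ : J^2 = -1) :
    ((1/2) * Real.sqrt (sliceNormSq ν f I) ≤ Real.sqrt (sliceNormSq ν f J) ∧
      Real.sqrt (sliceNormSq ν f J) ≤ 2 * Real.sqrt (sliceNormSq ν f I)) ∧
    (Integrable (fun p : ℝ × ℝ =>
        ‖f ((p.1 : Quaternion ℝ) + p.2 • I)‖^2 * Real.exp (-ν * (p.1^2 + p.2^2))) ↔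
      Integrable (fun p : ℝ × ℝ =>
        ‖f ((p.1 : Quaternion ℝ) + p.2 • J)‖^2 * Real.exp (-ν * (p.1^2 + p.2^2)))) :=
  stmt5_general ν f hf I J hI hJ
end

section
/- Let f(q) = Σ_{n≥0} qⁿ aₙ be a slice regular function on ℍ with ‖f‖² := (π/ν) Σ_{n≥0} (n!/νⁿ)|aₙ|² < ∞. Then for every q ∈ ℍ, |f(q)| ≤ (ν/π)^{1/2} e^{(ν/2)|q|²} ‖f‖. -/
open MeasureTheory Real Quaternion

/-! Write `‖qⁿ aₙ‖ = √((ν‖q‖²)ⁿ / n!) · √(n! / νⁿ ‖aₙ‖²)`; Cauchy–Schwarz then bounds the series by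
`√(∑ (ν‖q‖²)ⁿ / n!) = exp (ν‖q‖² / 2)` times the square root of the weighted coefficient sum. -/

theorem summable_sqrt_mul_sqrt {ι : Type*} {u v : ι → ℝ} (hu : 0 ≤ u) (hv : 0 ≤ v)
    (hu_sum : Summable u) (hv_sum : Summable v) : Summable fun i => √(u i) * √(v i) := by
  -- AM-GM: `√u √v ≤ (u + v) / 2`
  refine .of_nonneg_of_le (fun i => by positivity) (fun i => ?_) ((hu_sum.add hv_sum).div_const 2)
  have hu_sq := Real.sq_sqrt (hu i)
  have hv_sq := Real.sq_sqrt (hv i)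
  nlinarith [sq_nonneg (√(u i) - √(v i))]

theorem tsum_sqrt_mul_sqrt_le {ι : Type*} {u v : ι → ℝ} (hu : 0 ≤ u) (hv : 0 ≤ v)
    (hu_sum : Summable u) (hv_sum : Summable v) :
    ∑' i, √(u i) * √(v i) ≤ √(∑' i, u i) * √(∑' i, v i) := by
  refine (summable_sqrt_mul_sqrt hu hv hu_sum hv_sum).tsum_le_of_sum_le fun s => ?_
  calc ∑ i ∈ s, √(u i) * √(v i) ≤ √(∑ i ∈ s, u i) * √(∑ i ∈ s, v i) :=
        Real.sum_sqrt_mul_sqrt_le s hu hv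
    _ ≤ √(∑' i, u i) * √(∑' i, v i) := by
      gcongr
      · exact hu_sum.sum_le_tsum s fun i _ => hu i
      · exact hv_sum.sum_le_tsum s fun i _ => hv i

theorem Real.tsum_pow_div_factorial (x : ℝ) : ∑' n : ℕ, x ^ n / n.factorial = Real.exp x := by
  rw [Real.exp_eq_exp_ℝ, NormedSpace.exp_eq_tsum_div]

section FockSeries

variable {R : Type*} [NormedRing R] [NormOneClass R] {ν : ℝ}

theorem norm_pow_mul_le_sqrt_mul_sqrt (hν : 0 < ν) (q a : R) (n : ℕ) :
    ‖q ^ n * a‖ ≤ √((ν * ‖q‖ ^ 2) ^ n / n.factorial) * √(n.factorial / ν ^ n * ‖a‖ ^ 2) := by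
  have h_prod : (ν * ‖q‖ ^ 2) ^ n / n.factorial * (n.factorial / ν ^ n * ‖a‖ ^ 2) =
      (‖q‖ ^ n * ‖a‖) ^ 2 := by
    field_simp
    ring
  rw [← Real.sqrt_mul (by positivity), h_prod, Real.sqrt_sq (by positivity)]
  calc ‖q ^ n * a‖ ≤ ‖q ^ n‖ * ‖a‖ := norm_mul_le _ _
    _ ≤ ‖q‖ ^ n * ‖a‖ := by gcongr; exact norm_pow_le q n

theorem norm_tsum_pow_mul_le (hν : 0 < ν) {a : ℕ → R}
    (ha : Summable fun n : ℕ => (n.factorial : ℝ) / ν ^ n * ‖a n‖ ^ 2) (q : R) :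
    ‖∑' n : ℕ, q ^ n * a n‖ ≤
      Real.exp (ν / 2 * ‖q‖ ^ 2) * √(∑' n : ℕ, (n.factorial : ℝ) / ν ^ n * ‖a n‖ ^ 2) := by
  have hu : 0 ≤ fun n : ℕ => (ν * ‖q‖ ^ 2) ^ n / n.factorial := fun n => by positivity
  have hv : 0 ≤ fun n : ℕ => (n.factorial : ℝ) / ν ^ n * ‖a n‖ ^ 2 := fun n => by positivity
  have hu_sum := Real.summable_pow_div_factorial (ν * ‖q‖ ^ 2)
  have h_norm_sum : Summable fun n => ‖q ^ n * a n‖ :=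
    (summable_sqrt_mul_sqrt hu hv hu_sum ha).of_nonneg_of_le (fun n => norm_nonneg _)
      fun n => norm_pow_mul_le_sqrt_mul_sqrt hν q (a n) n
  calc ‖∑' n : ℕ, q ^ n * a n‖ ≤ ∑' n, ‖q ^ n * a n‖ := norm_tsum_le_tsum_norm h_norm_sum
    _ ≤ ∑' n : ℕ, √((ν * ‖q‖ ^ 2) ^ n / n.factorial) * √(n.factorial / ν ^ n * ‖a n‖ ^ 2) :=
      h_norm_sum.tsum_le_tsum (fun n => norm_pow_mul_le_sqrt_mul_sqrt hν q (a n) n)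
        (summable_sqrt_mul_sqrt hu hv hu_sum ha)
    _ ≤ √(Real.exp (ν * ‖q‖ ^ 2)) * √(∑' n : ℕ, (n.factorial : ℝ) / ν ^ n * ‖a n‖ ^ 2) := by
      rw [← Real.tsum_pow_div_factorial]
      exact tsum_sqrt_mul_sqrt_le hu hv hu_sum ha
    _ = Real.exp (ν / 2 * ‖q‖ ^ 2) * √(∑' n : ℕ, (n.factorial : ℝ) / ν ^ n * ‖a n‖ ^ 2) := by
      rw [← Real.exp_half, div_mul_eq_mul_div]

end FockSeries

theorem stmt6 (ν : ℝ) (hν : 0 < ν) (a : ℕ → Quaternion ℝ)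
    (ha : Summable (fun n : ℕ => (n.factorial : ℝ) / ν^n * ‖a n‖^2)) (q : Quaternion ℝ) :
    ‖∑' n : ℕ, q^n * a n‖ ≤
      Real.sqrt (ν/π) * Real.exp ((ν/2) * ‖q‖^2) *
        Real.sqrt ((π/ν) * ∑' n : ℕ, (n.factorial : ℝ) / ν^n * ‖a n‖^2) := by
  calc ‖∑' n : ℕ, q^n * a n‖
      ≤ Real.exp ((ν/2) * ‖q‖^2) * Real.sqrt (∑' n : ℕ, (n.factorial : ℝ) / ν^n * ‖a n‖^2) :=
        norm_tsum_pow_mul_le hν ha q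
    _ = Real.sqrt (ν/π) * Real.exp ((ν/2) * ‖q‖^2) *
        Real.sqrt ((π/ν) * ∑' n : ℕ, (n.factorial : ℝ) / ν^n * ‖a n‖^2) := by
      rw [Real.sqrt_mul (by positivity), mul_mul_mul_comm, ← Real.sqrt_mul (by positivity),
        div_mul_div_cancel₀ Real.pi_ne_zero, div_self hν.ne', Real.sqrt_one, one_mul]
end

section
/- For every quaternion q and real x, the kernel A(q;x) := (ν/π)^{3/4} e^{-(ν/2)(q²+x²) + ν√2 q x} equals the sum Σ_{n≥0} [h_n^ν(x)/‖h_n^ν‖_{L²(ℝ)}] · [qⁿ/‖e_n‖], where ‖h_n^ν‖²_{L²} = 2ⁿνⁿ n! (π/ν)^{1/2} and ‖e_n‖² = π n!/ν^{n+1}; equivalently A(q;x) = (ν/π)^{3/4} Σ_{n≥0} h_n^ν(x) qⁿ / (n! 2^{n/2}). -/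
open MeasureTheory Real Quaternion

/-! The exponent splits into the commuting pieces `-νx²/2`, `a q` and `b q²` with
`a = ν√2 x`, `b = -ν/2`, so the exponential factors as `e^{-νx²/2} exp (a q) exp (b q²)`.
Multiplying the two exponential series and collecting the powers `q^(i + 2j)` gives the
coefficients `∑ⱼ a^(n-2j)/(n-2j)! · b^j/j!` of `exp (a z + b z²)`. On the other side, the
substitution `t ↦ √(2ν) t` turns `h_n^ν` into the probabilists' Hermite polynomial `He_n` times a
Gaussian, and the explicit coefficients of `He_n` are exactly those of the generating function
`exp (y z - z²/2) = ∑ He_n(y) zⁿ/n!`. -/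

open Finset Polynomial
open scoped Nat

theorem Nat.factorial_two_mul_eq_mul_doubleFactorial (j : ℕ) :
    (2 * j)! = 2 ^ j * j ! * (2 * j - 1)‼ := by
  cases j with
  | zero => rfl
  | succ m =>
    rw [show 2 * (m + 1) = 2 * m + 1 + 1 by ring, Nat.factorial_eq_mul_doubleFactorial,
      show 2 * m + 1 + 1 = 2 * (m + 1) by ring, Nat.doubleFactorial_two_mul,
      show 2 * (m + 1) - 1 = 2 * m + 1 by omega]

/-- The `n`-th Taylor coefficient of `z ↦ exp (a z + b z²)`. -/
def expQuadCoeff {K : Type*} [Field K] (a b : K) (n : ℕ) : K :=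
  ∑ j ∈ range (n / 2 + 1), a ^ (n - 2 * j) / (n - 2 * j)! * (b ^ j / j !)

theorem mul_pow_mul_expQuadCoeff {K : Type*} [Field K] (t a b : K) (n : ℕ) :
    t ^ n * expQuadCoeff a b n = expQuadCoeff (t * a) (t ^ 2 * b) n := by
  rw [expQuadCoeff, expQuadCoeff, mul_sum]
  refine sum_congr rfl fun j hj => ?_
  have hjn : 2 * j ≤ n := by rw [mem_range] at hj; omega
  rw [← Nat.sub_add_cancel hjn, pow_add, pow_mul, Nat.add_sub_cancel]
  ring

namespace Polynomial

variable {K : Type*} [Field K] [CharZero K]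

theorem coeff_hermite_add_two_mul (i j : ℕ) :
    ((hermite (i + 2 * j)).coeff i : K) = (-1) ^ j * (i + 2 * j)! / (2 ^ j * j ! * i !) := by
  rw [add_comm i, coeff_hermite_explicit, add_comm (2 * j)]
  have hchoose := Nat.cast_choose K (Nat.le_add_right i (2 * j))
  rw [Nat.add_sub_cancel_left] at hchoose
  have hfact : ((2 * j)! : K) = 2 ^ j * j ! * (2 * j - 1)‼ := by
    exact_mod_cast Nat.factorial_two_mul_eq_mul_doubleFactorial j
  have hdfact : ((2 * j - 1)‼ : K) ≠ 0 := Nat.cast_ne_zero.2 (Nat.doubleFactorial_pos _).ne'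
  push_cast
  rw [hchoose, hfact]
  field_simp

theorem aeval_hermite_div_factorial (y : K) (n : ℕ) :
    aeval y (hermite n) / n ! = expQuadCoeff y (-2⁻¹) n := by
  have himage : (range (n / 2 + 1)).image (fun j => n - 2 * j) ⊆ range (n + 1) := by
    intro k hk
    simp only [mem_image, mem_range] at hk ⊢
    omega
  rw [aeval_eq_sum_range, natDegree_hermite, sum_div, ← sum_subset himage, sum_image]
  · refine sum_congr rfl fun j hj => ?_
    obtain ⟨i, rfl⟩ : ∃ i, n = i + 2 * j := ⟨n - 2 * j, by rw [mem_range] at hj; omega⟩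
    have hfact : ((i + 2 * j)! : K) ≠ 0 := Nat.cast_ne_zero.2 (Nat.factorial_ne_zero _)
    rw [Nat.add_sub_cancel, zsmul_eq_mul, mul_div_right_comm, coeff_hermite_add_two_mul,
      inv_eq_one_div, ← neg_div, div_pow]
    field_simp
  · intro j₁ hj₁ j₂ hj₂ h
    simp only [coe_range, Set.mem_Iio] at hj₁ hj₂ h
    omega
  · intro k hkn hk
    rw [mem_range] at hkn
    have hodd : Odd (n + k) := by
      refine Nat.not_even_iff_odd.1 fun heven => hk ?_
      obtain ⟨m, hm⟩ := heven
      simp only [mem_image, mem_range]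
      exact ⟨m - k, by omega, by omega⟩
    rw [coeff_hermite_of_odd_add hodd, zero_smul, zero_div]

end Polynomial

theorem hermiteW_eq_aeval_hermite {ν c : ℝ} (hc : c ^ 2 = 2 * ν) (n : ℕ) (x : ℝ) :
    hermiteW ν n x = c ^ n * aeval (c * x) (hermite n) * Real.exp (-(ν * x ^ 2) / 2) := by
  have hgauss :
      (fun t : ℝ => Real.exp (-ν * t ^ 2)) = fun t => Real.exp (-((c * t) ^ 2 / 2)) := by
    funext t
    rw [mul_pow, hc]
    ring_nf
  have hsmooth : ContDiff ℝ n (fun y : ℝ => Real.exp (-(y ^ 2 / 2))) := by fun_prop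
  have hsq : (c * x) ^ 2 / 2 = ν * x ^ 2 := by rw [mul_pow, hc]; ring
  rw [hermiteW, hgauss, congrFun (iteratedDeriv_comp_const_mul hsmooth c) x,
    iteratedDeriv_eq_iterate, deriv_gaussian_eq_hermite_mul_gaussian, hsq]
  have hexp :
      Real.exp (ν * x ^ 2 / 2) * Real.exp (-(ν * x ^ 2)) = Real.exp (-(ν * x ^ 2) / 2) := by
    rw [← Real.exp_add]; ring_nf
  have hsign : (-1 : ℝ) ^ n * (-1) ^ n = 1 := by rw [← mul_pow]; norm_num
  linear_combination (c ^ n * aeval (c * x) (hermite n)) *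
    (Real.exp (ν * x ^ 2 / 2) * Real.exp (-(ν * x ^ 2)) * hsign + hexp)

theorem hermiteW_div_eq_expQuadCoeff {ν : ℝ} (hν : 0 ≤ ν) (n : ℕ) (x : ℝ) :
    hermiteW ν n x / (n ! * 2 ^ ((n : ℝ) / 2)) =
      Real.exp (-(ν * x ^ 2) / 2) * expQuadCoeff (ν * √2 * x) (-(ν / 2)) n := by
  obtain ⟨t, rfl⟩ : ∃ t, t ^ 2 = ν := ⟨√ν, Real.sq_sqrt hν⟩
  have hc : (√2 * t) ^ 2 = 2 * t ^ 2 := by rw [mul_pow, Real.sq_sqrt zero_le_two]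
  have hpow : (2 : ℝ) ^ ((n : ℝ) / 2) = √2 ^ n := by
    rw [Real.sqrt_eq_rpow, ← Real.rpow_natCast, ← Real.rpow_mul zero_le_two, one_div_mul_eq_div]
  have hsqrt2 : √2 ≠ 0 := by positivity
  have hfact : (n ! : ℝ) ≠ 0 := Nat.cast_ne_zero.2 (Nat.factorial_ne_zero n)
  calc hermiteW (t ^ 2) n x / (n ! * 2 ^ ((n : ℝ) / 2))
      = Real.exp (-(t ^ 2 * x ^ 2) / 2) *
          (t ^ n * (aeval (√2 * t * x) (hermite n) / n !)) := by
        rw [hermiteW_eq_aeval_hermite hc, hpow, mul_pow]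
        field_simp
    _ = Real.exp (-(t ^ 2 * x ^ 2) / 2) * expQuadCoeff (t ^ 2 * √2 * x) (-(t ^ 2 / 2)) n := by
        rw [aeval_hermite_div_factorial, mul_pow_mul_expQuadCoeff]
        congr 2 <;> ring

theorem HasSum.sum_range_add_two_mul {α : Type*} [AddCommMonoid α] [TopologicalSpace α]
    [ContinuousAdd α] [RegularSpace α] {f : ℕ → ℕ → α} {s : α}
    (h : HasSum (fun p : ℕ × ℕ => f p.1 p.2) s) :
    HasSum (fun n => ∑ j ∈ range (n / 2 + 1), f (n - 2 * j) j) s := by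
  classical
  let g : ℕ × ℕ → α := fun p => if 2 * p.2 ≤ p.1 then f (p.1 - 2 * p.2) p.2 else 0
  have hinj : Function.Injective fun p : ℕ × ℕ => (p.1 + 2 * p.2, p.2) := by
    intro p p' hpp'
    simp only [Prod.mk.injEq] at hpp'
    exact Prod.ext (by omega) hpp'.2
  have hg : HasSum g s := by
    refine (hinj.hasSum_iff fun p hp => if_neg fun hle => hp ⟨(p.1 - 2 * p.2, p.2), ?_⟩).1 ?_
    · exact Prod.ext (Nat.sub_add_cancel hle) rfl
    · convert h using 2 with p
      simp
  refine hg.prod_fiberwise fun n => ?_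
  have hfiber : ∀ j ∈ range (n / 2 + 1), g (n, j) = f (n - 2 * j) j := fun j hj =>
    if_pos (by rw [mem_range] at hj; omega)
  rw [← sum_congr rfl hfiber]
  exact hasSum_sum_of_ne_finset_zero fun j hj => if_neg (by rw [mem_range] at hj; omega)

section BanachAlgebra

variable {𝕂 A : Type*} [RCLike 𝕂] [NormedRing A] [NormedAlgebra 𝕂 A]

variable (𝕂) in
theorem mem_eball_radius_expSeries (x : A) :
    x ∈ Metric.eball (0 : A) (NormedSpace.expSeries 𝕂 A).radius :=
  (NormedSpace.expSeries_radius_eq_top 𝕂 A).symm ▸ edist_lt_top _ _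

variable [CompleteSpace A]

theorem hasSum_exp_smul_mul_exp_smul_sq (a b : 𝕂) (q : A) :
    HasSum (fun p : ℕ × ℕ => (a ^ p.1 / p.1 ! * (b ^ p.2 / p.2 !)) • q ^ (p.1 + 2 * p.2))
      (NormedSpace.exp (a • q) * NormedSpace.exp (b • q ^ 2)) := by
  let f (x : A) (n : ℕ) : A := (n !⁻¹ : 𝕂) • x ^ n
  have hexp (x : A) : HasSum (f x) (NormedSpace.exp x) := NormedSpace.exp_series_hasSum_exp' x
  have hnorm (x : A) : Summable fun n => ‖f x n‖ := NormedSpace.norm_expSeries_summable' x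
  have hterm (i j : ℕ) :
      f (a • q) i * f (b • q ^ 2) j = (a ^ i / i ! * (b ^ j / j !)) • q ^ (i + 2 * j) := by
    simp only [f]
    rw [_root_.smul_pow, _root_.smul_pow, smul_smul, smul_smul, smul_mul_smul_comm, ← pow_mul,
      ← pow_add]
    congr 1
    ring
  have hprod := (hexp (a • q)).mul (hexp (b • q ^ 2))
    (summable_mul_of_summable_norm (hnorm (a • q)) (hnorm (b • q ^ 2)))
  simpa only [hterm] using hprod

theorem exp_algebraMap_add (c : 𝕂) (x : A) :
    NormedSpace.exp (algebraMap 𝕂 A c + x) = NormedSpace.exp c • NormedSpace.exp x := by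
  rw [NormedSpace.exp_add_of_commute_of_mem_ball (Algebra.commutes c x)
    (mem_eball_radius_expSeries 𝕂 _) (mem_eball_radius_expSeries 𝕂 _),
    ← NormedSpace.algebraMap_exp_comm, Algebra.smul_def]

theorem hasSum_expQuadCoeff_smul_pow (a b : 𝕂) (q : A) :
    HasSum (fun n => expQuadCoeff a b n • q ^ n) (NormedSpace.exp (a • q + b • q ^ 2)) := by
  have hcomm : Commute (a • q) (b • q ^ 2) := ((Commute.self_pow q 2).smul_left a).smul_right b
  have hterm (n : ℕ) : ∑ j ∈ range (n / 2 + 1),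
      (a ^ (n - 2 * j) / (n - 2 * j)! * (b ^ j / j !)) • q ^ (n - 2 * j + 2 * j) =
        expQuadCoeff a b n • q ^ n := by
    rw [expQuadCoeff, sum_smul]
    refine sum_congr rfl fun j hj => ?_
    rw [Nat.sub_add_cancel (by rw [mem_range] at hj; omega)]
  have hregroup := HasSum.sum_range_add_two_mul
    (f := fun i j => (a ^ i / i ! * (b ^ j / j !)) • q ^ (i + 2 * j))
    (hasSum_exp_smul_mul_exp_smul_sq a b q)
  rw [NormedSpace.exp_add_of_commute_of_mem_ball hcomm (mem_eball_radius_expSeries 𝕂 _)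
    (mem_eball_radius_expSeries 𝕂 _)]
  simpa only [hterm] using hregroup

end BanachAlgebra

theorem stmt9 (ν : ℝ) (hν : 0 < ν) (q : Quaternion ℝ) (x : ℝ) :
    SBkernel ν q x =
      ((ν/π)^((3:ℝ)/4)) •
        ∑' n : ℕ, (hermiteW ν n x / ((n.factorial : ℝ) * 2^((n:ℝ)/2))) • q^n := by
  set s := -(ν * x ^ 2) / 2
  have harg : -(ν / 2) • (q ^ 2 + (x : ℍ) ^ 2) + (ν * √2 * x) • q =
      algebraMap ℝ ℍ s + ((ν * √2 * x) • q + (-(ν / 2)) • q ^ 2) := by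
    rw [smul_add, ← Quaternion.coe_pow, Quaternion.smul_coe, show -(ν / 2) * x ^ 2 = s by ring,
      ← Quaternion.algebraMap_def]
    abel
  have hterm (n : ℕ) : Real.exp s • (expQuadCoeff (ν * √2 * x) (-(ν / 2)) n • q ^ n) =
      (hermiteW ν n x / (n ! * 2 ^ ((n : ℝ) / 2))) • q ^ n := by
    rw [smul_smul, hermiteW_div_eq_expQuadCoeff hν.le]
  have hseries :=
    (hasSum_expQuadCoeff_smul_pow (ν * √2 * x) (-(ν / 2)) q).const_smul (Real.exp s)
  simp only [hterm] at hseries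
  rw [SBkernel, harg, exp_algebraMap_add, ← Real.exp_eq_exp_ℝ, hseries.tsum_eq]
end

section
/- For ν > 0, an imaginary unit quaternion I, x ∈ ℝ, and ψ ∈ L²(ℝ;ℍ), the quaternionic Segal–Bargmann transform evaluated on the imaginary slice satisfies B_ν(ψ)(Ix/(√2 ν)) = (ν/π)^{3/4} e^{x²/(4ν)} F_I(e^{-νy²/2}ψ)(x), where F_I(φ)(x) = ∫_ℝ e^{Ixy} φ(y) dy is the left one-dimensional quaternionic Fourier transform. -/
open MeasureTheory Real Quaternion

/-- The left one-dimensional quaternionic Fourier transform. -/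
noncomputable def QFourier (I : Quaternion ℝ) (φ : ℝ → Quaternion ℝ) (x : ℝ) :
    Quaternion ℝ :=
  ∫ y : ℝ, NormedSpace.exp ((x * y) • I) * φ y

/-! On the slice `ℂ_I` the point `q = t I` has `q² = -t²`, so the exponent of the Segal–Bargmann
kernel splits into the real number `ν/2 (t² - y²)` and the imaginary part `ν √2 y t I`. Real
scalars are central, so the exponential factors; for `t = x / (√2 ν)` the imaginary factor is the
Fourier kernel `e^{I x y}` and the real one is `e^{x²/(4ν)} e^{-ν y²/2}`. -/

theorem NormedSpace.exp_algebraMap_add {A : Type*} [NormedRing A] [NormedAlgebra ℝ A]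
    [CompleteSpace A] (r : ℝ) (a : A) :
    NormedSpace.exp (algebraMap ℝ A r + a) = Real.exp r • NormedSpace.exp a := by
  rw [NormedSpace.exp_add_of_commute_of_mem_ball (𝕂 := ℝ) (Algebra.commutes r a)
    ((NormedSpace.expSeries_radius_eq_top ℝ A).symm ▸ edist_lt_top _ _)
    ((NormedSpace.expSeries_radius_eq_top ℝ A).symm ▸ edist_lt_top _ _),
    ← NormedSpace.algebraMap_exp_comm, Real.exp_eq_exp_ℝ, Algebra.smul_def]

theorem Quaternion.smul_sq_of_sq_eq_neg_one {I : ℍ} (hI : I ^ 2 = -1) (t : ℝ) :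
    (t • I) ^ 2 = algebraMap ℝ ℍ (-t ^ 2) := by
  rw [smul_pow, hI, map_neg, Algebra.algebraMap_eq_smul_one, smul_neg]

theorem SBkernel_smul_of_sq_eq_neg_one {I : ℍ} (hI : I ^ 2 = -1) (ν t y : ℝ) :
    SBkernel ν (t • I) y = ((ν / π) ^ ((3 : ℝ) / 4) * Real.exp (ν / 2 * (t ^ 2 - y ^ 2))) •
      NormedSpace.exp ((ν * √2 * y * t) • I) := by
  have hexponent : -(ν / 2) • ((t • I) ^ 2 + (y : ℍ) ^ 2) + (ν * √2 * y) • t • I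
      = algebraMap ℝ ℍ (ν / 2 * (t ^ 2 - y ^ 2)) + (ν * √2 * y * t) • I := by
    rw [Quaternion.smul_sq_of_sq_eq_neg_one hI, smul_smul, ← Quaternion.coe_pow,
      ← Quaternion.algebraMap_def, ← map_add, Algebra.smul_def (-(ν / 2)), ← map_mul]
    congr 2
    ring
  rw [SBkernel, hexponent, NormedSpace.exp_algebraMap_add, smul_smul]

theorem stmt16_general (ν : ℝ) (hν : 0 < ν) (I : Quaternion ℝ) (hI : I^2 = -1)
    (ψ : ℝ → Quaternion ℝ) (x : ℝ) :
    Bargmann ν ψ ((x / (Real.sqrt 2 * ν)) • I) =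
      (((ν/π)^((3:ℝ)/4) * Real.exp (x^2 / (4*ν)) : ℝ)) •
        QFourier I (fun y => Real.exp (-ν * y^2 / 2) • ψ y) x := by
  rw [Bargmann, QFourier, ← integral_smul]
  congr 1
  funext y
  have hfreq : ν * √2 * y * (x / (√2 * ν)) = x * y := by field_simp
  have hweight : (ν / π) ^ ((3 : ℝ) / 4) * Real.exp (ν / 2 * ((x / (√2 * ν)) ^ 2 - y ^ 2))
      = (ν / π) ^ ((3 : ℝ) / 4) * Real.exp (x ^ 2 / (4 * ν)) * Real.exp (-ν * y ^ 2 / 2) := by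
    rw [mul_assoc, ← Real.exp_add, div_pow, mul_pow, Real.sq_sqrt zero_le_two]
    congr 2
    field_simp
    ring
  rw [SBkernel_smul_of_sq_eq_neg_one hI, hfreq, hweight, smul_mul_assoc, mul_smul_comm, smul_smul]

theorem stmt16 (ν : ℝ) (hν : 0 < ν) (I : Quaternion ℝ) (hI : I^2 = -1)
    (ψ : ℝ → Quaternion ℝ) (hψ : MemLp ψ 2 (volume : Measure ℝ)) (x : ℝ) :
    Bargmann ν ψ ((x / (Real.sqrt 2 * ν)) • I) =
      (((ν/π)^((3:ℝ)/4) * Real.exp (x^2 / (4*ν)) : ℝ)) •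
        QFourier I (fun y => Real.exp (-ν * y^2 / 2) • ψ y) x :=
  stmt16_general ν hν I hI ψ x
end
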